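/- Operating-point-independent apparent impedance for the phase a-to-ground loop: suppose the fault-time network equation Y ⬝ (v_F, v_J, v_C, v_S) = (−Y_F ⬝ v_F, −Y_J ⬝ v_J, i_C + Y_C ⬝ v_C, i_S) and the prefault network equation Y ⬝ (v_F', v_J', v_C', v_S') = (0, −Y_J ⬝ v_J', i_C' + Y_C ⬝ v_C', i_S') hold, with v_S = v_S', i_C = i_C', and Y_LHS invertible, and set x := (ṽ_F, ṽ_J, ṽ_C, ĩ_S). Suppose z ≠ 0, m_T ≠ 1, the prefault line KVL v_F' = v_L' − (m_T·z) • i_L' holds, and the incremental remote current vector ĩ_R satisfies (D_R ⬝ x) − (D_F ⬝ x) = ((1−m_T)·z) • ĩ_R. Suppose furthermore the phase-a fault loop KVL v_La = m_T·z·(i_La + k·i_L0) + m_F·r_F·(i_La + i_Ra) holds, the prefault fault current is zero (i_La' + i_Ra' = 0), the a-components agree (ĩ_R at phase a equals i_Ra − i_Ra'), and the apparent current i_A := i_La + k·i_L0 is nonzero. Then the apparent impedance satisfies v_La / i_A = m_T·z + m_F·r_F·( (i_La − i_La') + (Ω ⬝ (v_L', i_L'))_a ) / i_A, where Ω = (1/((1−m_T)·z))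 • (D_R − D_F) ⬝ Y_LHS⁻¹ ⬝ Y_RHS ⬝ [I, −(m_T·z)•I]. In particular, the apparent impedance is determined by the fault parameters (m_T, m_F), the network matrices, the fault-time local measurements, and the prefault local measurements (v_L(t−δ), i_L(t−δ)) alone. -/

import Mathlib

open Matrix

/-- Assemble a vector on `ι = nF ⊕ nJ ⊕ nC ⊕ nS` from its four blocks. -/
def blockVec {nF nJ nC nS : Type*} (xF : nF → ℂ) (xJ : nJ → ℂ) (xC : nC → ℂ)
    (xS : nS → ℂ) : nF ⊕ nJ ⊕ nC ⊕ nS → ℂ :=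
  Sum.elim xF (Sum.elim xJ (Sum.elim xC xS))

/-- The correction matrix `B`: `Y_F` in the (F,F) block, `Y_J` in the (J,J)
block, `−Y_C` in the (C,C) block, the S block-column equal to `−I_S − Y_{·,S}`
(where `I_S` has the identity in the S rows and zeros elsewhere and `Y_{·,S}`
is the S block-column of `Y`), and zeros in all other blocks.  Then
`Y_LHS = Y + B`. -/
def Bmat {nF nJ nC nS : Type*}
    [DecidableEq nF] [DecidableEq nJ] [DecidableEq nC] [DecidableEq nS]
    (Y : Matrix (nF ⊕ nJ ⊕ nC ⊕ nS) (nF ⊕ nJ ⊕ nC ⊕ nS) ℂ)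
    (YF : Matrix nF nF ℂ) (YJ : Matrix nJ nJ ℂ) (YC : Matrix nC nC ℂ) :
    Matrix (nF ⊕ nJ ⊕ nC ⊕ nS) (nF ⊕ nJ ⊕ nC ⊕ nS) ℂ :=
  Matrix.of fun r c =>
    match r, c with
    | r', Sum.inr (Sum.inr (Sum.inr s)) =>
        -(if r' = Sum.inr (Sum.inr (Sum.inr s)) then 1 else 0)
          - Y r' (Sum.inr (Sum.inr (Sum.inr s)))
    | Sum.inl i, Sum.inl j => YF i j
    | Sum.inr (Sum.inl i), Sum.inr (Sum.inl j) => YJ i j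
    | Sum.inr (Sum.inr (Sum.inl i)), Sum.inr (Sum.inr (Sum.inl j)) => -YC i j
    | _, _ => 0

/-- The right-hand-side matrix `Y_RHS`: `−Y_F` in the F rows, zeros elsewhere. -/
def YRHSmat {nF nJ nC nS : Type*} (YF : Matrix nF nF ℂ) :
    Matrix (nF ⊕ nJ ⊕ nC ⊕ nS) nF ℂ :=
  Matrix.of fun r j =>
    match r with
    | Sum.inl i => -YF i j
    | _ => 0

/-!
Subtracting the prefault network equation from the fault-time one, with unchanged source
voltages and IBR currents, leaves a linear system `Y_LHS x = Y_RHS v_F'` for the incremental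
state `x`: the S block-column of `B` trades the cancelled source voltages for the incremental
source currents. Hence `x = Y_LHS⁻¹ Y_RHS v_F'`, and the prefault line KVL expresses `v_F'`
through the local prefault measurements, so the remote relation gives `ĩ_R = Ω (v_L', i_L')`.
Since no fault current flows before the fault, `i_La + i_Ra = (i_La - i_La') + ĩ_Ra`, and dividing
the fault loop KVL by `i_A` gives the formula.
-/

section BlockVec

variable {nF nJ nC nS : Type*}

theorem blockVec_sub (a a' : nF → ℂ) (b b' : nJ → ℂ) (c c' : nC → ℂ)
    (d d' : nS → ℂ) :
    blockVec a b c d - blockVec a' b' c' d' = blockVec (a - a') (b - b') (c - c') (d - d') := by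
  funext r
  rcases r with i | i | i | i <;> rfl

theorem blockVec_add (a a' : nF → ℂ) (b b' : nJ → ℂ) (c c' : nC → ℂ)
    (d d' : nS → ℂ) :
    blockVec a b c d + blockVec a' b' c' d' = blockVec (a + a') (b + b') (c + c') (d + d') := by
  funext r
  rcases r with i | i | i | i <;> rfl

theorem YRHSmat_mulVec [Fintype nF] (YF : Matrix nF nF ℂ) (v : nF → ℂ) :
    (YRHSmat YF : Matrix (nF ⊕ nJ ⊕ nC ⊕ nS) nF ℂ) *ᵥ v =
      blockVec (-(YF *ᵥ v)) 0 0 0 := by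
  funext r
  rcases r with i | i | i | i <;> simp [YRHSmat, blockVec, mulVec, dotProduct]

variable [Fintype nF] [Fintype nJ] [Fintype nC] [Fintype nS]
  [DecidableEq nF] [DecidableEq nJ] [DecidableEq nC] [DecidableEq nS]

theorem Bmat_mulVec_blockVec (Y : Matrix (nF ⊕ nJ ⊕ nC ⊕ nS) (nF ⊕ nJ ⊕ nC ⊕ nS) ℂ)
    (YF : Matrix nF nF ℂ) (YJ : Matrix nJ nJ ℂ) (YC : Matrix nC nC ℂ)
    (xF : nF → ℂ) (xJ : nJ → ℂ) (xC : nC → ℂ) (xS : nS → ℂ) :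
    Bmat Y YF YJ YC *ᵥ blockVec xF xJ xC xS =
      blockVec (YF *ᵥ xF) (YJ *ᵥ xJ) (-(YC *ᵥ xC)) (-xS) - Y *ᵥ blockVec 0 0 0 xS := by
  funext r
  rcases r with i | i | i | i <;>
    simp [Bmat, blockVec, mulVec, dotProduct, Fintype.sum_sum_type, add_mul, ite_mul,
      Finset.sum_add_distrib, sub_eq_add_neg]

theorem add_Bmat_mulVec_incremental_eq_YRHSmat_mulVec
    {Y : Matrix (nF ⊕ nJ ⊕ nC ⊕ nS) (nF ⊕ nJ ⊕ nC ⊕ nS) ℂ}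
    {YF : Matrix nF nF ℂ} {YJ : Matrix nJ nJ ℂ} {YC : Matrix nC nC ℂ}
    {vF vF' : nF → ℂ} {vJ vJ' : nJ → ℂ} {vC vC' : nC → ℂ} {vS : nS → ℂ}
    {iC : nC → ℂ} {iS iS' : nS → ℂ}
    (hfault : Y *ᵥ blockVec vF vJ vC vS =
      blockVec (-(YF *ᵥ vF)) (-(YJ *ᵥ vJ)) (iC + YC *ᵥ vC) iS)
    (hpre : Y *ᵥ blockVec vF' vJ' vC' vS =
      blockVec 0 (-(YJ *ᵥ vJ')) (iC + YC *ᵥ vC') iS') :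
    (Y + Bmat Y YF YJ YC) *ᵥ blockVec (vF - vF') (vJ - vJ') (vC - vC') (iS - iS') =
      YRHSmat YF *ᵥ vF' := by
  have hsplit : blockVec (vF - vF') (vJ - vJ') (vC - vC') (iS - iS') =
      (blockVec vF vJ vC vS - blockVec vF' vJ' vC' vS) + blockVec 0 0 0 (iS - iS') := by
    rw [blockVec_sub, blockVec_add]
    simp
  rw [add_mulVec, Bmat_mulVec_blockVec, hsplit, mulVec_add, mulVec_sub, hfault, hpre,
    add_add_sub_cancel, blockVec_sub, blockVec_add, YRHSmat_mulVec]
  simp only [mulVec_sub]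
  congr 1 <;> abel

end BlockVec

theorem Matrix.mul_inv_mul_mul_mulVec_eq {K l m n o : Type*} [Field K] [Fintype m] [Fintype n]
    [Fintype o] [DecidableEq m] (M : Matrix l m K) {A : Matrix m m K} (hA : IsUnit A)
    {R : Matrix m n K} {P : Matrix n o K} {x : m → K} {w : o → K}
    (h : A *ᵥ x = R *ᵥ (P *ᵥ w)) : (M * A⁻¹ * R * P) *ᵥ w = M *ᵥ x := by
  let := hA.invertible
  rw [← mulVec_mulVec, ← mulVec_mulVec, ← mulVec_mulVec, inv_mulVec_eq_vec h.symm]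

theorem Matrix.fromCols_one_smul_one_mulVec_sumElim {K n : Type*} [CommRing K] [Fintype n]
    [DecidableEq n] (a : K) (u v : n → K) :
    fromCols (1 : Matrix n n K) (a • 1) *ᵥ Sum.elim u v = u + a • v := by
  rw [fromCols_mulVec_sumElim, one_mulVec, smul_mulVec, one_mulVec]

theorem Matrix.one_div_smul_mulVec_eq {K m n : Type*} [Field K] [Fintype n]
    {N : Matrix m n K} {w : n → K} {c : K} {i : m → K} (hc : c ≠ 0) (h : N *ᵥ w = c • i) :
    ((1 / c) • N) *ᵥ w = i := by
  rw [smul_mulVec, h, smul_smul, one_div, inv_mul_cancel₀ hc, one_smul]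

theorem apparent_impedance_eq_of_loop_eq {K : Type*} [Field K]
    {v iA iLa iRa iLa' iRa' zL zF : K} (hloop : v = zL * iA + zF * (iLa + iRa))
    (hpre : iLa' + iRa' = 0) (hA : iA ≠ 0) :
    v / iA = zL + zF * ((iLa - iLa') + (iRa - iRa')) / iA := by
  field_simp
  linear_combination hloop + zF * hpre

/-- **Operating-point-independent apparent impedance for the phase a-to-ground
loop.**  Under the incremental network hypotheses (fault-time and prefault
network equations, periodic sources, invertible `Y_LHS`), the prefault line
KVL, and the phase-a fault loop relations, the apparent impedance seen by the
relay equals `m_T·z + m_F·r_F·((i_La − i_La') + (Ω ⬝ (v_L', i_L'))_a)/i_A`: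
it is determined by the fault parameters, the network matrices, the fault-time
local measurements, and the prefault local measurements alone. -/
theorem apparent_impedance_ag_operating_point_independent
    {nJ nC nS : Type*} [Fintype nJ] [Fintype nC] [Fintype nS]
    [DecidableEq nJ] [DecidableEq nC] [DecidableEq nS]
    (Y : Matrix (Fin 3 ⊕ nJ ⊕ nC ⊕ nS) (Fin 3 ⊕ nJ ⊕ nC ⊕ nS) ℂ)
    (YF : Matrix (Fin 3) (Fin 3) ℂ) (YJ : Matrix nJ nJ ℂ) (YC : Matrix nC nC ℂ)
    (vF vF' : Fin 3 → ℂ) (vJ vJ' : nJ → ℂ) (vC vC' : nC → ℂ) (vS vS' : nS → ℂ)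
    (iC iC' : nC → ℂ) (iS iS' : nS → ℂ)
    (vL' iL' iRinc : Fin 3 → ℂ) (z k : ℂ) (m_T m_F r_F : ℝ)
    (D_R D_F : Matrix (Fin 3) (Fin 3 ⊕ nJ ⊕ nC ⊕ nS) ℂ)
    (x : Fin 3 ⊕ nJ ⊕ nC ⊕ nS → ℂ)
    (v_La i_La i_L0 i_Ra i_La' i_Ra' : ℂ)
    (hfault : Y *ᵥ blockVec vF vJ vC vS =
      blockVec (-(YF *ᵥ vF)) (-(YJ *ᵥ vJ)) (iC + YC *ᵥ vC) iS)
    (hpre : Y *ᵥ blockVec vF' vJ' vC' vS' =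
      blockVec 0 (-(YJ *ᵥ vJ')) (iC' + YC *ᵥ vC') iS')
    (hvS : vS = vS') (hiC : iC = iC')
    (hinv : IsUnit (Y + Bmat Y YF YJ YC))
    (hx : x = blockVec (vF - vF') (vJ - vJ') (vC - vC') (iS - iS'))
    (hz : z ≠ 0) (hmT : m_T ≠ 1)
    (hlineKVL : vF' = vL' - ((m_T : ℂ) * z) • iL')
    (hremote : D_R *ᵥ x - D_F *ᵥ x = ((1 - (m_T : ℂ)) * z) • iRinc)
    (hloopKVL : v_La = (m_T : ℂ) * z * (i_La + k * i_L0)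
      + (m_F : ℂ) * (r_F : ℂ) * (i_La + i_Ra))
    (hprefaultF : i_La' + i_Ra' = 0)
    (hphaseA : iRinc 0 = i_Ra - i_Ra')
    (hA : i_La + k * i_L0 ≠ 0) :
    v_La / (i_La + k * i_L0) =
      (m_T : ℂ) * z + (m_F : ℂ) * (r_F : ℂ) *
        ((i_La - i_La') +
          (((1 / ((1 - (m_T : ℂ)) * z)) •
            (((D_R - D_F) * (Y + Bmat Y YF YJ YC)⁻¹ * YRHSmat YF : Matrix (Fin 3) (Fin 3) ℂ) *
              Matrix.fromCols (1 : Matrix (Fin 3) (Fin 3) ℂ)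
                (-((m_T : ℂ) * z) • (1 : Matrix (Fin 3) (Fin 3) ℂ)))) *ᵥ
            Sum.elim vL' iL') 0) / (i_La + k * i_L0) := by
  subst hvS hiC
  have hc : (1 - (m_T : ℂ)) * z ≠ 0 :=
    mul_ne_zero (sub_ne_zero.mpr (by exact_mod_cast hmT.symm)) hz
  have hvF' : fromCols (1 : Matrix (Fin 3) (Fin 3) ℂ) (-((m_T : ℂ) * z) • 1) *ᵥ
      Sum.elim vL' iL' = vF' := by
    rw [fromCols_one_smul_one_mulVec_sumElim, hlineKVL, neg_smul, sub_eq_add_neg]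
  have hΩ := mul_inv_mul_mul_mulVec_eq (D_R - D_F) hinv
    ((add_Bmat_mulVec_incremental_eq_YRHSmat_mulVec hfault hpre).trans (congrArg _ hvF'.symm))
  rw [sub_mulVec, ← hx, hremote] at hΩ
  -- `erw`: the type ascription in the statement elaborates the inner product of `Ω` with the
  -- multiplication instance of the type synonym `CStarMatrix`.
  erw [one_div_smul_mulVec_eq hc hΩ]
  rw [hphaseA]
  exact apparent_impedance_eq_of_loop_eq hloopKVL hprefaultF hA
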